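/- arXiv:math/0601297 — 5 statements merged into one kernel-verified Lean document; each statement's English description precedes it below -/
import Mathlib

section
/- The Lie algebra Γ with basis a,b,c,d,e,f,g,h and brackets [a,b]=[c,d]=f, [b,c]=[d,e]=g, [b,f]=[g,d]=h (all other basis brackets zero) is nilpotent of class exactly 3: γ2(Γ) = span{f,g,h}, γ3(Γ) = span{h}, and γ4(Γ) = 0. -/
/-- The underlying 8-dimensional real vector space of Γ, with coordinates
`a,b,c,d,e,f,g,h` indexed by `0,…,7`. -/
def G3 : Type := Fin 8 → ℝ

noncomputable instance : AddCommGroup G3 := Pi.addCommGroup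
noncomputable instance : Module ℝ G3 := Pi.module _ _ _

lemma G3.add_apply (x y : G3) (i : Fin 8) : (x + y) i = x i + y i := rfl
lemma G3.smul_apply (t : ℝ) (x : G3) (i : Fin 8) : (t • x) i = t * x i := rfl
lemma G3.zero_apply (i : Fin 8) : (0 : G3) i = 0 := rfl

/-- The bracket determined by `[a,b]=[c,d]=f`, `[b,c]=[d,e]=g`, `[b,f]=[g,d]=h`. -/
def brkt (x y : G3) : G3 := fun i =>
  if i = 5 then x 0 * y 1 - x 1 * y 0 + x 2 * y 3 - x 3 * y 2
  else if i = 6 then x 1 * y 2 - x 2 * y 1 + x 3 * y 4 - x 4 * y 3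
  else if i = 7 then x 1 * y 5 - x 5 * y 1 + x 6 * y 3 - x 3 * y 6
  else 0

instance : Bracket G3 G3 := ⟨brkt⟩

lemma G3.lie_def (x y : G3) : ⁅x, y⁆ = brkt x y := rfl

noncomputable instance : LieRing G3 where
  add_lie x y z := by
    funext i; fin_cases i <;>
      simp [G3.lie_def, brkt, G3.add_apply] <;> ring
  lie_add x y z := by
    funext i; fin_cases i <;>
      simp [G3.lie_def, brkt, G3.add_apply] <;> ring
  lie_self x := by
    funext i; fin_cases i <;>
      simp [G3.lie_def, brkt, G3.zero_apply] <;> ring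
  leibniz_lie x y z := by
    funext i; fin_cases i <;>
      simp [G3.lie_def, brkt, G3.add_apply] <;> ring

noncomputable instance : LieAlgebra ℝ G3 where
  lie_smul t x y := by
    funext i; fin_cases i <;>
      simp [G3.lie_def, brkt, G3.smul_apply] <;> ring

/-- basis vector -/
def bv (j : Fin 8) : G3 := fun i => if i = j then 1 else 0


section aux

/-- coords 0..4 vanish -/
noncomputable def V567 : Submodule ℝ G3 where
  carrier := {x | x 0 = 0 ∧ x 1 = 0 ∧ x 2 = 0 ∧ x 3 = 0 ∧ x 4 = 0}
  add_mem' := by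
    rintro x y ⟨h0,h1,h2,h3,h4⟩ ⟨k0,k1,k2,k3,k4⟩
    simp_all [G3.add_apply]
  zero_mem' := by simp [G3.zero_apply]
  smul_mem' := by
    rintro t x ⟨h0,h1,h2,h3,h4⟩
    simp_all [G3.smul_apply]

/-- only coord 7 nonzero -/
noncomputable def V7 : Submodule ℝ G3 where
  carrier := {x | x 0 = 0 ∧ x 1 = 0 ∧ x 2 = 0 ∧ x 3 = 0 ∧ x 4 = 0 ∧ x 5 = 0 ∧ x 6 = 0}
  add_mem' := by
    rintro x y ⟨h0,h1,h2,h3,h4,h5,h6⟩ ⟨k0,k1,k2,k3,k4,k5,k6⟩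
    simp_all [G3.add_apply]
  zero_mem' := by simp [G3.zero_apply]
  smul_mem' := by
    rintro t x ⟨h0,h1,h2,h3,h4,h5,h6⟩
    simp_all [G3.smul_apply]

lemma decomp567 (x : G3) (h0 : x 0 = 0) (h1 : x 1 = 0) (h2 : x 2 = 0)
    (h3 : x 3 = 0) (h4 : x 4 = 0) :
    x = x 5 • bv 5 + x 6 • bv 6 + x 7 • bv 7 := by
  funext i; fin_cases i <;>
    simp_all +decide [G3.add_apply, G3.smul_apply, bv]

lemma decomp7 (x : G3) (h0 : x 0 = 0) (h1 : x 1 = 0) (h2 : x 2 = 0)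
    (h3 : x 3 = 0) (h4 : x 4 = 0) (h5 : x 5 = 0) (h6 : x 6 = 0) :
    x = x 7 • bv 7 := by
  funext i; fin_cases i <;>
    simp_all +decide [G3.smul_apply, bv]

lemma span567 : Submodule.span ℝ {bv 5, bv 6, bv 7} = V567 := by
  apply le_antisymm
  · rw [Submodule.span_le]
    rintro x (rfl | rfl | rfl) <;> exact ⟨rfl, rfl, rfl, rfl, rfl⟩
  · rintro x ⟨h0,h1,h2,h3,h4⟩
    rw [decomp567 x h0 h1 h2 h3 h4]
    refine Submodule.add_mem _ (Submodule.add_mem _ ?_ ?_) ?_ <;>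
      exact Submodule.smul_mem _ _ (Submodule.subset_span (by simp))

lemma span7 : Submodule.span ℝ ({bv 7} : Set G3) = V7 := by
  apply le_antisymm
  · rw [Submodule.span_le]
    rintro x rfl; exact ⟨rfl, rfl, rfl, rfl, rfl, rfl, rfl⟩
  · rintro x ⟨h0,h1,h2,h3,h4,h5,h6⟩
    rw [decomp7 x h0 h1 h2 h3 h4 h5 h6]
    exact Submodule.smul_mem _ _ (Submodule.subset_span rfl)

lemma lie_bv01 : ⁅bv 0, bv 1⁆ = bv 5 := by
  funext i; fin_cases i <;> simp +decide [G3.lie_def, brkt, bv]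

lemma lie_bv12 : ⁅bv 1, bv 2⁆ = bv 6 := by
  funext i; fin_cases i <;> simp +decide [G3.lie_def, brkt, bv]

lemma lie_bv15 : ⁅bv 1, bv 5⁆ = bv 7 := by
  funext i; fin_cases i <;> simp +decide [G3.lie_def, brkt, bv]

lemma g2_eq : (LieModule.lowerCentralSeries ℝ G3 G3 1 : Submodule ℝ G3) = V567 := by
  rw [show (1:ℕ) = 0 + 1 from rfl, LieModule.lowerCentralSeries_succ,
    LieIdeal.toLieSubalgebra_toSubmodule,
    LieSubmodule.lieIdeal_oper_eq_linear_span']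
  apply le_antisymm
  · rw [Submodule.span_le]
    rintro m ⟨x, -, n, -, rfl⟩
    exact ⟨rfl, rfl, rfl, rfl, rfl⟩
  · rintro x ⟨h0,h1,h2,h3,h4⟩
    rw [decomp567 x h0 h1 h2 h3 h4]
    refine Submodule.add_mem _ (Submodule.add_mem _ ?_ ?_) ?_ <;>
      refine Submodule.smul_mem _ _ (Submodule.subset_span ?_)
    · exact ⟨bv 0, trivial, bv 1, trivial, lie_bv01⟩
    · exact ⟨bv 1, trivial, bv 2, trivial, lie_bv12⟩
    · exact ⟨bv 1, trivial, bv 5, trivial, lie_bv15⟩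

lemma g3_eq : (LieModule.lowerCentralSeries ℝ G3 G3 2 : Submodule ℝ G3) = V7 := by
  rw [show (2:ℕ) = 1 + 1 from rfl, LieModule.lowerCentralSeries_succ,
    LieIdeal.toLieSubalgebra_toSubmodule,
    LieSubmodule.lieIdeal_oper_eq_linear_span']
  apply le_antisymm
  · rw [Submodule.span_le]
    rintro m ⟨x, -, n, hn, rfl⟩
    have hn' : (n : G3) ∈ V567 := by
      rw [← g2_eq]; exact hn
    obtain ⟨h0,h1,h2,h3,h4⟩ := hn'
    refine ⟨rfl, rfl, rfl, rfl, rfl, ?_, ?_⟩ <;>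
      simp [G3.lie_def, brkt, h0, h1, h2, h3, h4]
  · rintro x ⟨h0,h1,h2,h3,h4,h5,h6⟩
    rw [decomp7 x h0 h1 h2 h3 h4 h5 h6]
    refine Submodule.smul_mem _ _ (Submodule.subset_span ?_)
    refine ⟨bv 1, trivial, bv 5, ?_, lie_bv15⟩
    show bv 5 ∈ (LieModule.lowerCentralSeries ℝ G3 G3 1 : Submodule ℝ G3)
    rw [g2_eq]; exact ⟨rfl, rfl, rfl, rfl, rfl⟩

end aux

/-- Γ is nilpotent of class exactly 3: γ₂(Γ)=span{f,g,h}, γ₃(Γ)=span{h}, γ₄(Γ)=0.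
(Here `LieModule.lowerCentralSeries ℝ G3 G3 (j-1)` is γ_j, so γ₁(Γ)=Γ.) -/
theorem stmt_4 :
    (LieModule.lowerCentralSeries ℝ G3 G3 1 : Submodule ℝ G3)
        = Submodule.span ℝ {bv 5, bv 6, bv 7} ∧
    (LieModule.lowerCentralSeries ℝ G3 G3 2 : Submodule ℝ G3) = Submodule.span ℝ {bv 7} ∧
    LieModule.lowerCentralSeries ℝ G3 G3 3 = ⊥ := by
  refine ⟨by rw [g2_eq, span567], by rw [g3_eq, span7], ?_⟩
  rw [eq_bot_iff, ← LieSubmodule.toSubmodule_le_toSubmodule,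
    show (3:ℕ) = 2 + 1 from rfl, LieModule.lowerCentralSeries_succ,
    LieSubmodule.lieIdeal_oper_eq_linear_span', Submodule.span_le]
  rintro m ⟨x, -, n, hn, rfl⟩
  have hn' : (n : G3) ∈ V7 := by rw [← g3_eq]; exact hn
  obtain ⟨h0,h1,h2,h3,h4,h5,h6⟩ := hn'
  have hz : ⁅x, n⁆ = (0 : G3) := by
    funext i; fin_cases i <;>
      simp [G3.lie_def, brkt, G3.zero_apply, h0, h1, h2, h3, h4, h5, h6]
  simp [hz]
end

section
/- The decomposition Γ = V1 ⊕ V2 ⊕ V3 with V1 = span{a,b,c,d,e}, V2 = span{f,g}, V3 = span{h} is a grading of the Lie algebra Γ: [V_i, V_j] ⊆ V_{i+j} for all i, j (where V_k = 0 for k > 3). -/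
/-- The graded pieces `V1 = span{a,b,c,d,e}`, `V2 = span{f,g}`, `V3 = span{h}`,
with `V k = 0` otherwise. -/
noncomputable def Vg : ℕ → Submodule ℝ G3
  | 1 => Submodule.span ℝ {bv 0, bv 1, bv 2, bv 3, bv 4}
  | 2 => Submodule.span ℝ {bv 5, bv 6}
  | 3 => Submodule.span ℝ {bv 7}
  | _ => ⊥

/-!
Give `a, b, c, d, e` weight 1, `f, g` weight 2 and `h` weight 3. Then `V n` consists of the
vectors supported on the coordinates of weight `n`, and the bracket is homogeneous: each
coordinate `k` of `⁅x, y⁆` is a combination of products `x p * y q` with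
`weight p + weight q = weight k`. If `x ∈ V i` and `y ∈ V j`, such a product can only be nonzero
when `weight k = i + j`.
-/

open Submodule

theorem Pi.mem_span_image_single_one_iff {ι R : Type*} [Fintype ι] [DecidableEq ι] [Semiring R]
    {S : Set ι} {x : ι → R} :
    x ∈ span R ((fun k ↦ Pi.single k 1) '' S) ↔ ∀ k ∉ S, x k = 0 := by
  refine ⟨fun hx k hk ↦ ?_, fun hx ↦ ?_⟩
  · induction hx using span_induction with
    | mem z hz =>
      obtain ⟨l, hl, rfl⟩ := hz
      exact Pi.single_eq_of_ne (ne_of_mem_of_not_mem hl hk).symm _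
    | zero => rfl
    | add u v _ _ hu hv => simp [hu, hv]
    | smul t u _ hu => simp [hu]
  · classical
    have hsum : ∑ k ∈ S.toFinset, x k • Pi.single k (1 : R) = x := by
      ext i
      by_cases hi : i ∈ S <;> simp [Pi.single_apply, hi, hx]
    rw [← hsum]
    exact sum_mem fun k hk ↦ smul_mem _ _ (subset_span ⟨k, by simpa using hk, rfl⟩)

def weight : Fin 8 → ℕ := ![1, 1, 1, 1, 1, 2, 2, 3]

lemma bv_eq_single (j : Fin 8) : bv j = Pi.single j 1 := by
  funext i
  simp [bv, Pi.single_apply]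

lemma Vg_eq_span_weight (n : ℕ) : Vg n = span ℝ (bv '' {k | weight k = n}) := by
  have hset (s : Finset (Fin 8)) (h : ∀ k, weight k = n ↔ k ∈ s) :
      {k | weight k = n} = s := by
    ext k
    simp [h]
  match n with
  | 0 => rw [hset ∅ (by decide)]; simp [Vg]
  | 1 => rw [hset {0, 1, 2, 3, 4} (by decide)]; simp [Vg, Set.image_insert_eq]
  | 2 => rw [hset {5, 6} (by decide)]; simp [Vg, Set.image_insert_eq]
  | 3 => rw [hset {7} (by decide)]; simp [Vg]
  | n + 4 => rw [hset ∅ (fun k ↦ by fin_cases k <;> simp [weight])]; simp [Vg]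

lemma mem_Vg_iff {n : ℕ} {x : G3} : x ∈ Vg n ↔ ∀ k, weight k ≠ n → x k = 0 := by
  rw [Vg_eq_span_weight, funext bv_eq_single]
  exact Pi.mem_span_image_single_one_iff (R := ℝ) (S := {k | weight k = n}) (x := x)

lemma lie_apply_of_lt_five (x y : G3) {k : Fin 8} (hk : k < 5) : ⁅x, y⁆ k = 0 := by
  have : k ≠ 5 ∧ k ≠ 6 ∧ k ≠ 7 := by omega
  simp [G3.lie_def, brkt, this]

lemma lie_apply_five (x y : G3) : ⁅x, y⁆ 5 = x 0 * y 1 - x 1 * y 0 + x 2 * y 3 - x 3 * y 2 := rfl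

lemma lie_apply_six (x y : G3) : ⁅x, y⁆ 6 = x 1 * y 2 - x 2 * y 1 + x 3 * y 4 - x 4 * y 3 := rfl

lemma lie_apply_seven (x y : G3) : ⁅x, y⁆ 7 = x 1 * y 5 - x 5 * y 1 + x 6 * y 3 - x 3 * y 6 := rfl

section Homogeneous

variable {i j : ℕ} {x y : G3} (hx : ∀ p, weight p ≠ i → x p = 0)
  (hy : ∀ q, weight q ≠ j → y q = 0)
include hx hy

lemma mul_eq_zero_of_weight_add_ne {p q k : Fin 8} (hpq : weight p + weight q = weight k)
    (hk : weight k ≠ i + j) : x p * y q = 0 := by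
  by_cases hp : weight p = i
  · rw [hy q (by omega), mul_zero]
  · rw [hx p hp, zero_mul]

lemma lie_apply_eq_zero_of_weight_ne {k : Fin 8} (hk : weight k ≠ i + j) : ⁅x, y⁆ k = 0 := by
  have h p q (hpq : weight p + weight q = weight k) := mul_eq_zero_of_weight_add_ne hx hy hpq hk
  obtain hk5 | rfl | rfl | rfl :=
    (by decide : ∀ k : Fin 8, k < 5 ∨ k = 5 ∨ k = 6 ∨ k = 7) k
  · exact lie_apply_of_lt_five x y hk5
  · rw [lie_apply_five, h 0 1 rfl, h 1 0 rfl, h 2 3 rfl, h 3 2 rfl]; ring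
  · rw [lie_apply_six, h 1 2 rfl, h 2 1 rfl, h 3 4 rfl, h 4 3 rfl]; ring
  · rw [lie_apply_seven, h 1 5 rfl, h 5 1 rfl, h 6 3 rfl, h 3 6 rfl]; ring

end Homogeneous

/-- The decomposition Γ = V1 ⊕ V2 ⊕ V3 is a grading: `[V_i, V_j] ⊆ V_{i+j}`
for all `i, j` (where `V_k = 0` for `k > 3`). -/
theorem stmt_5 : ∀ i j : ℕ, ∀ x ∈ Vg i, ∀ y ∈ Vg j, ⁅x, y⁆ ∈ Vg (i + j) := by
  intro i j x hx y hy
  rw [mem_Vg_iff] at hx hy ⊢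
  exact fun k hk ↦ lie_apply_eq_zero_of_weight_ne hx hy hk
end

section
/- For nonzero real numbers t_a, t_b, t_c, t_d, t_e satisfying t_a·t_b = t_c·t_d and t_b·t_c = t_d·t_e, the linear map sending a↦t_a·a, b↦t_b·b, c↦t_c·c, d↦t_d·d, e↦t_e·e, f↦t_c·t_d·f, g↦t_b·t_c·g, h↦t_b·t_c·t_d·h is a Lie algebra automorphism of Γ. -/
/-- The diagonal-type linear map `a↦ta·a, b↦tb·b, c↦tc·c, d↦td·d, e↦te·e,
f↦tc·td·f, g↦tb·tc·g, h↦tb·tc·td·h`. -/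
def diagMap (ta tb tc td te : ℝ) (x : G3) : G3 := fun i =>
  if i = 0 then ta * x 0
  else if i = 1 then tb * x 1
  else if i = 2 then tc * x 2
  else if i = 3 then td * x 3
  else if i = 4 then te * x 4
  else if i = 5 then tc * td * x 5
  else if i = 6 then tb * tc * x 6
  else tb * tc * td * x 7

/-! `diagMap` scales the basis vectors by weights `w a, …, w h`, so it is linear, and it is
invertible exactly when the weights are nonzero, with inverse the map with inverted weights.
It preserves the bracket as soon as `w u * w v = w [u,v]` for each structure constant; the
weights of `f, g, h` are chosen for this, and `h1`, `h2` are the remaining two cases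
`[a,b] = f` and `[d,e] = g`. -/

lemma diagMap_add (ta tb tc td te : ℝ) (x y : G3) :
    diagMap ta tb tc td te (x + y) = diagMap ta tb tc td te x + diagMap ta tb tc td te y := by
  funext i; fin_cases i <;> simp [diagMap, G3.add_apply, mul_add]

lemma diagMap_smul (ta tb tc td te r : ℝ) (x : G3) :
    diagMap ta tb tc td te (r • x) = r • diagMap ta tb tc td te x := by
  funext i; fin_cases i <;> simp [diagMap, G3.smul_apply, mul_left_comm]

lemma diagMap_diagMap (sa sb sc sd se ta tb tc td te : ℝ) (x : G3) :
    diagMap sa sb sc sd se (diagMap ta tb tc td te x)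
      = diagMap (sa * ta) (sb * tb) (sc * tc) (sd * td) (se * te) x := by
  funext i; fin_cases i <;> simp [diagMap, mul_assoc, mul_left_comm]

lemma diagMap_one (x : G3) : diagMap 1 1 1 1 1 x = x := by
  funext i; fin_cases i <;> simp [diagMap]

lemma diagMap_bijective {ta tb tc td te : ℝ} (hta : ta ≠ 0) (htb : tb ≠ 0) (htc : tc ≠ 0)
    (htd : td ≠ 0) (hte : te ≠ 0) : Function.Bijective (diagMap ta tb tc td te) := by
  refine Function.bijective_iff_has_inverse.mpr
    ⟨diagMap ta⁻¹ tb⁻¹ tc⁻¹ td⁻¹ te⁻¹, fun x => ?_, fun x => ?_⟩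
  · rw [diagMap_diagMap, inv_mul_cancel₀ hta, inv_mul_cancel₀ htb, inv_mul_cancel₀ htc,
      inv_mul_cancel₀ htd, inv_mul_cancel₀ hte, diagMap_one]
  · rw [diagMap_diagMap, mul_inv_cancel₀ hta, mul_inv_cancel₀ htb, mul_inv_cancel₀ htc,
      mul_inv_cancel₀ htd, mul_inv_cancel₀ hte, diagMap_one]

lemma diagMap_lie {ta tb tc td te : ℝ} (h1 : ta * tb = tc * td) (h2 : tb * tc = td * te)
    (x y : G3) :
    diagMap ta tb tc td te ⁅x, y⁆ = ⁅diagMap ta tb tc td te x, diagMap ta tb tc td te y⁆ := by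
  funext i
  fin_cases i <;> simp only [diagMap, G3.lie_def, brkt, Fin.zero_eta, Fin.mk_one,
    Fin.reduceFinMk, Fin.isValue, Fin.reduceEq, one_ne_zero, ↓reduceIte, mul_zero]
  · linear_combination (x 1 * y 0 - x 0 * y 1) * h1
  · linear_combination (x 3 * y 4 - x 4 * y 3) * h2
  · ring

/-- For nonzero reals `ta,…,te` with `ta·tb = tc·td` and `tb·tc = td·te`, the map
`diagMap ta tb tc td te` is a Lie algebra automorphism of Γ: it is linear, bijective
and preserves the bracket. -/
theorem stmt_6 (ta tb tc td te : ℝ) (hta : ta ≠ 0) (htb : tb ≠ 0) (htc : tc ≠ 0)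
    (htd : td ≠ 0) (hte : te ≠ 0) (h1 : ta * tb = tc * td) (h2 : tb * tc = td * te) :
    Function.Bijective (diagMap ta tb tc td te) ∧
    (∀ x y : G3, diagMap ta tb tc td te (x + y)
        = diagMap ta tb tc td te x + diagMap ta tb tc td te y) ∧
    (∀ (r : ℝ) (x : G3), diagMap ta tb tc td te (r • x) = r • diagMap ta tb tc td te x) ∧
    (∀ x y : G3, diagMap ta tb tc td te ⁅x, y⁆
        = ⁅diagMap ta tb tc td te x, diagMap ta tb tc td te y⁆) :=
  ⟨diagMap_bijective hta htb htc htd hte, diagMap_add _ _ _ _ _, diagMap_smul _ _ _ _ _,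
    diagMap_lie h1 h2⟩
end

section
/- The linear map sending a↦e, b↦d, c↦c, d↦b, e↦a, f↦−g, g↦−f, h↦h is a Lie algebra automorphism of Γ. -/
/-- The linear map `a↦e, b↦d, c↦c, d↦b, e↦a, f↦−g, g↦−f, h↦h`. -/
def swapMap (x : G3) : G3 := fun i =>
  if i = 0 then x 4
  else if i = 1 then x 3
  else if i = 2 then x 2
  else if i = 3 then x 1
  else if i = 4 then x 0
  else if i = 5 then -x 6
  else if i = 6 then -x 5
  else x 7

/-! The swap fixes the structure constants: it exchanges `[a,b] = f` with `[e,d] = -g`,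
`[c,d] = f` with `[c,b] = -g`, and `[b,f] = h` with `[d,-g] = h`. -/

theorem swapMap_involutive : Function.Involutive swapMap := by
  intro x; funext i; fin_cases i <;> simp [swapMap]

theorem swapMap_add (x y : G3) : swapMap (x + y) = swapMap x + swapMap y := by
  funext i; fin_cases i <;> simp [swapMap, G3.add_apply, add_comm]

theorem swapMap_smul (r : ℝ) (x : G3) : swapMap (r • x) = r • swapMap x := by
  funext i; fin_cases i <;> simp [swapMap, G3.smul_apply]

theorem swapMap_lie (x y : G3) : swapMap ⁅x, y⁆ = ⁅swapMap x, swapMap y⁆ := by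
  funext i; fin_cases i <;> simp [swapMap, G3.lie_def, brkt] <;> ring

/-- The map `a↦e, b↦d, c↦c, d↦b, e↦a, f↦−g, g↦−f, h↦h` is a Lie algebra
automorphism of Γ: linear, bijective and bracket-preserving. -/
theorem stmt_7 :
    Function.Bijective swapMap ∧
    (∀ x y : G3, swapMap (x + y) = swapMap x + swapMap y) ∧
    (∀ (r : ℝ) (x : G3), swapMap (r • x) = r • swapMap x) ∧
    (∀ x y : G3, swapMap ⁅x, y⁆ = ⁅swapMap x, swapMap y⁆) :=
  ⟨swapMap_involutive.bijective, swapMap_add, swapMap_smul, swapMap_lie⟩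
end

section
/- In the group H generated by a,b,c,d,e with γ4(H)=1 and the relations [a,c]=[a,d]=[a,e]=[b,d]=[b,e]=[c,e]=1, [ace, bd^{-1}]=1, [ac^{-1}e, bd]=1, the commutator [b,[c,d]] equals [d,[b,c]]^{-1}. -/
open scoped commutatorElement

/-!
Since `γ₄ = 1`, triple commutators are central and, by the three subgroups lemma, any two
commutators commute. Expanding `⁅b * d, c⁆ = ⁅d * b, c⁆` then gives `⁅b, ⁅d, c⁆⁆ = ⁅d, ⁅b, c⁆⁆`,
and `u ↦ ⁅b, u⁆` inverts `⁅d, c⁆ = ⁅c, d⁆⁻¹` because `⁅b, ⁅d, c⁆⁆` is central.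
-/

namespace Subgroup

variable {G : Type*} [Group G]

theorem commutatorElement_mem_lowerCentralSeries_one (x y : G) :
    ⁅x, y⁆ ∈ (⊤ : Subgroup G).lowerCentralSeries 1 :=
  commutator_mem_commutator (mem_top x) (mem_top y)

theorem commutatorElement_mem_lowerCentralSeries_succ {n : ℕ} {g : G}
    (hg : g ∈ (⊤ : Subgroup G).lowerCentralSeries n) (z : G) :
    ⁅g, z⁆ ∈ (⊤ : Subgroup G).lowerCentralSeries (n + 1) :=
  commutator_mem_commutator hg (mem_top z)

theorem commutatorElement_mul_left_eq_commutatorElement_mul (x y z : G) :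
    ⁅x * y, z⁆ = ⁅x, ⁅y, z⁆⁆ * (⁅y, z⁆ * ⁅x, z⁆) := by
  simp only [commutatorElement_def]
  group

section ClassThree

variable (hG : (⊤ : Subgroup G).lowerCentralSeries 3 = ⊥)
include hG

theorem commute_of_mem_lowerCentralSeries_two {g : G}
    (hg : g ∈ (⊤ : Subgroup G).lowerCentralSeries 2) (z : G) : Commute g z := by
  have h := commutatorElement_mem_lowerCentralSeries_succ hg z
  rwa [hG, mem_bot, commutatorElement_eq_one_iff_commute] at h

theorem commutator_lowerCentralSeries_one_self_eq_bot :
    ⁅(⊤ : Subgroup G).lowerCentralSeries 1, (⊤ : Subgroup G).lowerCentralSeries 1⁆ = ⊥ := by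
  refine commutator_commutator_eq_bot_of_rotate (H₁ := ⊤) (H₂ := ⊤) ?_ hG
  rw [commutator_comm ⊤]
  exact hG

theorem commute_commutatorElement (p q r s : G) : Commute ⁅p, q⁆ ⁅r, s⁆ := by
  rw [← commutatorElement_eq_one_iff_commute, ← mem_bot,
    ← commutator_lowerCentralSeries_one_self_eq_bot hG]
  exact commutator_mem_commutator (commutatorElement_mem_lowerCentralSeries_one p q)
    (commutatorElement_mem_lowerCentralSeries_one r s)

theorem commutatorElement_inv_commutatorElement (x y z : G) :
    ⁅x, ⁅y, z⁆⁻¹⁆ = ⁅x, ⁅y, z⁆⁆⁻¹ := by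
  have hcentral := commute_of_mem_lowerCentralSeries_two hG
    (commutatorElement_mem_lowerCentralSeries_succ
      (commutatorElement_mem_lowerCentralSeries_one y z) x) ⁅y, z⁆
  rw [commutatorElement_inv_right, mul_assoc, hcentral.eq, inv_mul_cancel_left,
    commutatorElement_inv]

theorem commutatorElement_commutatorElement_comm_of_commute {x y : G} (hxy : Commute x y)
    (z : G) : ⁅x, ⁅y, z⁆⁆ = ⁅y, ⁅x, z⁆⁆ := by
  have h := commutatorElement_mul_left_eq_commutatorElement_mul x y z
  rw [hxy.eq, commutatorElement_mul_left_eq_commutatorElement_mul y x z,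
    (commute_commutatorElement hG x z y z).eq] at h
  exact (mul_right_cancel h).symm

end ClassThree

end Subgroup

theorem stmt_16_general {H : Type*} [Group H]
    (b c d : H)
    (h4 : Subgroup.lowerCentralSeries (⊤ : Subgroup H) 3 = ⊥)
    (hbd : ⁅b, d⁆ = 1) :
    ⁅b, ⁅c, d⁆⁆ = ⁅d, ⁅b, c⁆⁆⁻¹ := by
  rw [← commutatorElement_inv d c, Subgroup.commutatorElement_inv_commutatorElement h4,
    Subgroup.commutatorElement_commutatorElement_comm_of_commute h4
      (commutatorElement_eq_one_iff_commute.mp hbd)]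

/-- In the group `H` generated by `a,b,c,d,e` with `γ₄(H)=1` and relations
`[a,c]=[a,d]=[a,e]=[b,d]=[b,e]=[c,e]=1`, `[ace, bd⁻¹]=1`, `[ac⁻¹e, bd]=1`,
the commutator `[b,[c,d]]` equals `[d,[b,c]]⁻¹`. -/
theorem stmt_16 {H : Type*} [Group H]
    (a b c d e : H)
    (hgen : Subgroup.closure {a, b, c, d, e} = ⊤)
    (h4 : Subgroup.lowerCentralSeries (⊤ : Subgroup H) 3 = ⊥)
    (hac : ⁅a, c⁆ = 1) (had : ⁅a, d⁆ = 1) (hae : ⁅a, e⁆ = 1)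
    (hbd : ⁅b, d⁆ = 1) (hbe : ⁅b, e⁆ = 1) (hce : ⁅c, e⁆ = 1)
    (h1 : ⁅a * c * e, b * d⁻¹⁆ = 1) (h2 : ⁅a * c⁻¹ * e, b * d⁆ = 1) :
    ⁅b, ⁅c, d⁆⁆ = ⁅d, ⁅b, c⁆⁆⁻¹ :=
  stmt_16_general b c d h4 hbd
end
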